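/- Let r, H > 0 and let C be the Godunov update for parameters r, H. For all real numbers a, b, c with a ≤ b ≤ c, one has C(a, c) ≤ C(b, c). -/
import Mathlib


/-- The Godunov update for parameters `r, H`: the two-sided quadratic branch when
`|a - b| < r * H`, and the one-sided upwind branch otherwise. -/
noncomputable def godunov (r H a b : ℝ) : ℝ :=
  if |a - b| < r * H then (a + b + Real.sqrt (2 * r ^ 2 * H ^ 2 - (a - b) ^ 2)) / 2
  else min a b + r * H

/-- If `a ≤ b ≤ c` then `C(a, c) ≤ C(b, c)` for the Godunov update. -/
theorem godunov_mono_first_arg (r H : ℝ) (hr : 0 < r) (hH : 0 < H)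
    (a b c : ℝ) (hab : a ≤ b) (hbc : b ≤ c) :
    godunov r H a c ≤ godunov r H b c := by
  have hac : a ≤ c := hab.trans hbc
  have habs1 : |a - c| = c - a := by rw [abs_sub_comm]; exact abs_of_nonneg (by linarith)
  have habs2 : |b - c| = c - b := by rw [abs_sub_comm]; exact abs_of_nonneg (by linarith)
  unfold godunov
  rw [habs1, habs2]
  by_cases h1 : c - a < r * H
  · have h2 : c - b < r * H := by linarith
    rw [if_pos h1, if_pos h2]
    have hsq : Real.sqrt (2 * r ^ 2 * H ^ 2 - (a - c) ^ 2)
        ≤ Real.sqrt (2 * r ^ 2 * H ^ 2 - (b - c) ^ 2) := by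
      apply Real.sqrt_le_sqrt
      nlinarith
    linarith
  · rw [if_neg h1, min_eq_left hac]
    by_cases h2 : c - b < r * H
    · rw [if_pos h2]
      have hs : c - b ≤ Real.sqrt (2 * r ^ 2 * H ^ 2 - (b - c) ^ 2) := by
        nlinarith [Real.sq_sqrt (show (0:ℝ) ≤ 2 * r ^ 2 * H ^ 2 - (b - c) ^ 2 by nlinarith),
          Real.sqrt_nonneg (2 * r ^ 2 * H ^ 2 - (b - c) ^ 2)]
      push_neg at h1
      linarith
    · rw [if_neg h2, min_eq_left hbc]
      linarith
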